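/- arXiv:1208.5617 — 3 statements merged into one kernel-verified Lean document; each statement's English description precedes it below -/
import Mathlib

section
/- A Frobenius group F of order q^2(q-1), where q = 2^p with p an odd prime, whose Frobenius kernel has order q^2 and whose point stabilizers are cyclic of order q-1, is not metabelian if the kernel is nonabelian of exponent 4 with center of order q. -/
/-!
A Frobenius complement `H` acts fixed-point-freely on the kernel `K`: an element of `K` commuting
with some `h ∈ H`, `h ≠ 1`, is trivial. Hence `k ↦ ⁅k, h⁆` is injective on the finite group `K`,
so it is onto and every element of `K` is a commutator. Thus `K ≤ F'`, and if `F'` were abelian,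
so would be `K`.
-/

open scoped commutatorElement

namespace Subgroup

variable {G : Type*} [Group G]

theorem mem_of_commute_of_frobenius {H : Subgroup G}
    (hfrob : ∀ g : G, g ∉ H → H ⊓ H.map (MulAut.conj g).toMonoidHom = ⊥)
    {h y : G} (hH : h ∈ H) (h1 : h ≠ 1) (hyh : Commute y h) : y ∈ H := by
  by_contra hy
  have hconj : h ∈ H.map (MulAut.conj y).toMonoidHom :=
    ⟨h, hH, by simp [hyh.eq]⟩
  exact h1 ((mem_bot).1 (hfrob y hy ▸ mem_inf.2 ⟨hH, hconj⟩))

theorem le_commutator_zpowers_of_commute_eq_one {K : Subgroup G} [K.Normal] [Finite K] {h : G}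
    (hfree : ∀ y ∈ K, Commute y h → y = 1) : K ≤ ⁅K, zpowers h⁆ := by
  have hmem (k : K) : ⁅(k : G), h⁆ ∈ K := by
    rw [commutatorElement_def, mul_assoc, mul_assoc]
    exact K.mul_mem k.2 (by simpa [mul_assoc] using ‹K.Normal›.conj_mem _ (K.inv_mem k.2) h)
  let f : K → K := fun k => ⟨⁅(k : G), h⁆, hmem k⟩
  have hf : Function.Injective f := by
    intro k l hkl
    have hcomm : Commute ((l : G)⁻¹ * k) h := by
      have hconj := congrArg Subtype.val hkl
      simp only [f, commutatorElement_def, mul_left_inj] at hconj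
      calc (l : G)⁻¹ * k * h = (l : G)⁻¹ * (k * h * (k : G)⁻¹) * k := by group
        _ = (l : G)⁻¹ * (l * h * (l : G)⁻¹) * k := by rw [hconj]
        _ = h * ((l : G)⁻¹ * k) := by group
    have hlk := hfree _ (K.mul_mem (K.inv_mem l.2) k.2) hcomm
    exact Subtype.ext (inv_mul_eq_one.1 hlk).symm
  intro x hx
  obtain ⟨k, hk⟩ := (Finite.injective_iff_surjective.1 hf) ⟨x, hx⟩
  rw [← show ⁅(k : G), h⁆ = x from congrArg Subtype.val hk]
  exact commutator_mem_commutator k.2 (mem_zpowers h)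

theorem commute_of_le_derivedSeries_one {K : Subgroup G} (hmeta : derivedSeries G 2 = ⊥)
    (hK : K ≤ derivedSeries G 1) {a b : G} (ha : a ∈ K) (hb : b ∈ K) : Commute a b := by
  have hcen := (commutator_eq_bot_iff_le_centralizer).1 hmeta
  exact mem_centralizer_iff.1 (hcen (hK hb)) a (hK ha)

end Subgroup

theorem stmt_8_general (p : ℕ) (hp : p.Prime)
    {F : Type*} [Group F]
    (q : ℕ) (hq : q = 2 ^ p)
    (K : Subgroup F) (hKnormal : K.Normal)
    (hKcard : Nat.card K = q ^ 2)
    (hKnonab : ∃ a b : K, a * b ≠ b * a)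
    (H : Subgroup F) (hHcard : Nat.card H = q - 1)
    (hcompl : K ⊓ H = ⊥ ∧ K ⊔ H = ⊤)
    (hfrob : ∀ g : F, g ∉ H → H ⊓ Subgroup.map (MulAut.conj g).toMonoidHom H = ⊥) :
    derivedSeries F 2 ≠ ⊥ := by
  intro hmeta
  have hq4 : 4 ≤ q := hq ▸ Nat.pow_le_pow_right two_pos hp.two_le
  obtain ⟨h, hH, h1⟩ : ∃ h ∈ H, h ≠ 1 := by
    refine H.bot_or_exists_ne_one.resolve_left fun hbot => ?_
    rw [hbot, Subgroup.card_bot] at hHcard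
    omega
  have : Finite K := Nat.finite_of_card_ne_zero (by rw [hKcard]; positivity)
  have hfree : ∀ y ∈ K, Commute y h → y = 1 := fun y hyK hyh =>
    (Subgroup.mem_bot).1 (hcompl.1 ▸ Subgroup.mem_inf.2
      ⟨hyK, Subgroup.mem_of_commute_of_frobenius hfrob hH h1 hyh⟩)
  have hKD : K ≤ derivedSeries F 1 :=
    (Subgroup.le_commutator_zpowers_of_commute_eq_one hfree).trans
      (derivedSeries_one F ▸ Subgroup.commutator_mono le_top le_top)
  obtain ⟨a, b, hab⟩ := hKnonab
  exact hab (Subtype.ext (Subgroup.commute_of_le_derivedSeries_one hmeta hKD a.2 b.2))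

/-- a Frobenius group `F` of order `q²(q-1)`, `q = 2^p` with `p` an odd prime,
with kernel `K` of order `q²` (a 2-group of exponent 4, nonabelian, with centre of order `q`)
and cyclic point stabilizers of order `q-1`, is not metabelian. -/
theorem stmt_8 (p : ℕ) (hp : p.Prime) (hodd : Odd p)
    {F : Type*} [Group F] [Fintype F]
    (q : ℕ) (hq : q = 2 ^ p)
    (hcard : Fintype.card F = q ^ 2 * (q - 1))
    (K : Subgroup F) (hKnormal : K.Normal)
    (hKcard : Nat.card K = q ^ 2)
    (hKexp : Monoid.exponent K = 4)
    (hKcenter : Nat.card (Subgroup.center K) = q)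
    (hKnonab : ∃ a b : K, a * b ≠ b * a)
    (H : Subgroup F) (hHcyc : IsCyclic H) (hHcard : Nat.card H = q - 1)
    (hcompl : K ⊓ H = ⊥ ∧ K ⊔ H = ⊤)
    (hfrob : ∀ g : F, g ∉ H → H ⊓ Subgroup.map (MulAut.conj g).toMonoidHom H = ⊥) :
    derivedSeries F 2 ≠ ⊥ :=
  stmt_8_general p hp q hq K hKnormal hKcard hKnonab H hHcard hcompl hfrob
end

section
/- Let G be a torsion-free locally nilpotent group and M ≤ G a subgroup such that the isolator I_G(M) equals G. Then for every i ≥ 0, the i-th derived subgroup G^(i) is contained in the isolator I_G(M^(i)); in particular, if M is solvable of derived length d, then G is solvable of derived length at most d. -/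
/-!
In a nilpotent group generated by elements that have a power in `N`, every element has a power
in `N`, and every element of the derived subgroup has a power in `⁅N, N⁆`. Both are proved by
induction on the nilpotency class, passing to the quotient by the last nontrivial term `Z` of the
lower central series: `Z` is central and generated by commutators `⁅a, u⁆`, and centrality gives
`⁅a, u⁆ ^ (k * t) = ⁅a ^ k, u ^ t⁆`, which lies in `N` (resp. `⁅N, N⁆`) for suitable `k, t`.
Applied to two-generator subgroups of a locally nilpotent group, this makes the isolator of a
subgroup a subgroup and puts the commutator of two elements of `I(N)` in `I(⁅N, N⁆)`; induction
on `i` then gives `G⁽ⁱ⁾ ⊆ I(M⁽ⁱ⁾)`, and torsion-freeness gives `I(1) = 1`.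
-/

/-- The isolator of a subgroup `M` of `G`: elements having a positive power in `M`. -/
def isolator {G : Type*} [Group G] (M : Subgroup G) : Set G :=
  {g : G | ∃ n : ℕ, 0 < n ∧ g ^ n ∈ M}

open Subgroup
open scoped commutatorElement

section Isolator

variable {G : Type*} [Group G] {N N' : Subgroup G}

theorem isolator_mono (h : N ≤ N') : isolator N ⊆ isolator N' :=
  fun _ ⟨n, hn, hg⟩ => ⟨n, hn, h hg⟩

theorem isolator_comap {H : Type*} [Group H] (f : G →* H) (N : Subgroup H) :
    isolator (N.comap f) = f ⁻¹' isolator N := by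
  ext g
  simp [isolator, map_pow]

theorem image_isolator_subset {H : Type*} [Group H] (f : G →* H) (N : Subgroup G) :
    f '' isolator N ⊆ isolator (N.map f) := by
  rintro _ ⟨g, ⟨n, hn, hg⟩, rfl⟩
  exact ⟨n, hn, by rw [← map_pow]; exact mem_map_of_mem f hg⟩

theorem one_mem_isolator (N : Subgroup G) : (1 : G) ∈ isolator N :=
  ⟨1, one_pos, by simp⟩

theorem inv_mem_isolator {g : G} (hg : g ∈ isolator N) : g⁻¹ ∈ isolator N := by
  obtain ⟨n, hn, hgn⟩ := hg
  exact ⟨n, hn, by rw [inv_pow]; exact N.inv_mem hgn⟩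

theorem mul_mem_isolator_of_commute {x y : G} (hxy : Commute x y) (hx : x ∈ isolator N)
    (hy : y ∈ isolator N) : x * y ∈ isolator N := by
  obtain ⟨m, hm, hxm⟩ := hx
  obtain ⟨n, hn, hyn⟩ := hy
  refine ⟨m * n, Nat.mul_pos hm hn, ?_⟩
  rw [hxy.mul_pow, pow_mul, mul_comm m n, pow_mul]
  exact N.mul_mem (N.pow_mem hxm n) (N.pow_mem hyn m)

theorem closure_subset_isolator_of_subset_center {S : Set G} (hSc : S ⊆ center G)
    (hS : S ⊆ isolator N) : (closure S : Set G) ⊆ isolator N := by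
  have hc : closure S ≤ center G := (closure_le _).mpr hSc
  intro g hg
  induction hg using closure_induction with
  | mem x hx => exact hS hx
  | one => exact one_mem_isolator N
  | mul x y hx hy ihx ihy =>
    exact mul_mem_isolator_of_commute (mem_center_iff.mp (hc hy) x) ihx ihy
  | inv x _ ihx => exact inv_mem_isolator ihx

theorem Subgroup.normal_of_le_center {Z : Subgroup G} (hZ : Z ≤ center G) : Z.Normal :=
  ⟨fun z hz g => by rwa [mem_center_iff.mp (hZ hz) g, mul_inv_cancel_right]⟩

theorem mem_isolator_of_mem_isolator_sup {Z : Subgroup G} (hZ : Z ≤ center G)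
    (hZN : (Z : Set G) ⊆ isolator N) {g : G} (hg : g ∈ isolator (N ⊔ Z)) : g ∈ isolator N := by
  have := normal_of_le_center hZ
  obtain ⟨k, hk, hgk⟩ := hg
  obtain ⟨n, hn, z, hz, hnz⟩ := mem_sup_of_normal_right.mp hgk
  obtain ⟨s, hs, hzs⟩ := hZN hz
  refine ⟨k * s, Nat.mul_pos hk hs, ?_⟩
  rw [pow_mul, ← hnz, Commute.mul_pow (mem_center_iff.mp (hZ hz) n)]
  exact N.mul_mem (N.pow_mem hn s) hzs

end Isolator

section Commutator

variable {G : Type*} [Group G] {a b : G}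

theorem commutatorElement_pow_right_of_mem_center (h : ⁅a, b⁆ ∈ center G) (n : ℕ) :
    ⁅a, b ^ n⁆ = ⁅a, b⁆ ^ n := by
  induction n with
  | zero => simp
  | succ n ih =>
    rw [pow_succ, commutatorElement_mul_right_eq_mul_conj, ih, mul_assoc (⁅a, b⁆ ^ n),
      mem_center_iff.mp h (b ^ n), ← mul_assoc, mul_inv_cancel_right, pow_succ]

theorem commutatorElement_pow_left_of_mem_center (h : ⁅a, b⁆ ∈ center G) (n : ℕ) :
    ⁅a ^ n, b⁆ = ⁅a, b⁆ ^ n := by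
  induction n with
  | zero => simp
  | succ n ih =>
    rw [pow_succ', commutatorElement_mul_left_eq_conj_mul, ih, mem_center_iff.mp (pow_mem h n) a,
      mul_inv_cancel_right, pow_succ]

theorem commutatorElement_mul_mul_of_mem_center {z₁ z₂ : G} (h₁ : z₁ ∈ center G)
    (h₂ : z₂ ∈ center G) : ⁅a * z₁, b * z₂⁆ = ⁅a, b⁆ := by
  have e₁ : ∀ c : G, ⁅z₁, c⁆ = 1 := fun c =>
    commutatorElement_eq_one_iff_commute.mpr (mem_center_iff.mp h₁ c).symm
  have e₂ : ∀ c : G, ⁅c, z₂⁆ = 1 := fun c =>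
    commutatorElement_eq_one_iff_commute.mpr (mem_center_iff.mp h₂ c)
  rw [commutatorElement_mul_left_eq_conj_mul, e₁, mul_one, mul_inv_cancel, one_mul,
    commutatorElement_mul_right_eq_mul_conj, e₂, mul_one, mul_inv_cancel_right]

end Commutator

section Nilpotent

variable {K Q : Type*} [Group K] [Group Q]

theorem lowerCentralSeries_le_center_of_succ_eq_bot {n : ℕ}
    (h : (⊤ : Subgroup K).lowerCentralSeries (n + 1) = ⊥) :
    (⊤ : Subgroup K).lowerCentralSeries n ≤ center K :=
  commutator_top_right_eq_bot_iff_le_center.mp h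

theorem Group.IsNilpotent.exists_lowerCentralSeries_succ_eq_bot (hK : Group.IsNilpotent K) :
    ∃ c, (⊤ : Subgroup K).lowerCentralSeries (c + 1) = ⊥ := by
  obtain ⟨n, hn⟩ := Subgroup.nilpotent_iff_lowerCentralSeries.mp hK
  exact ⟨n, eq_bot_iff.mpr (hn ▸ Subgroup.lowerCentralSeries_antitone _ n.le_succ)⟩

theorem map_top_lowerCentralSeries_of_surjective {f : K →* Q} (hf : Function.Surjective f)
    (n : ℕ) :
    ((⊤ : Subgroup K).lowerCentralSeries n).map f = (⊤ : Subgroup Q).lowerCentralSeries n := by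
  rw [map_lowerCentralSeries, map_top_of_surjective f hf]

theorem lowerCentralSeries_quotient_lowerCentralSeries_eq_bot (n : ℕ) :
    (⊤ : Subgroup (K ⧸ (⊤ : Subgroup K).lowerCentralSeries n)).lowerCentralSeries n = ⊥ := by
  rw [← map_top_lowerCentralSeries_of_surjective (QuotientGroup.mk'_surjective _),
    Subgroup.map_eq_bot_iff, QuotientGroup.ker_mk']

theorem mem_isolator_sup_iff (Z : Subgroup K) [Z.Normal] {N : Subgroup K} {g : K} :
    g ∈ isolator (N ⊔ Z) ↔ (g : K ⧸ Z) ∈ isolator (N.map (QuotientGroup.mk' Z)) := by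
  have h := isolator_comap (QuotientGroup.mk' Z) (N.map (QuotientGroup.mk' Z))
  rw [comap_map_eq, QuotientGroup.ker_mk'] at h
  exact Set.ext_iff.mp h g

theorem lowerCentralSeries_succ_subset_isolator {N : Subgroup K} {d : ℕ}
    (hK : (⊤ : Subgroup K).lowerCentralSeries (d + 2) = ⊥)
    (h : ∀ a ∈ (⊤ : Subgroup K).lowerCentralSeries d, ∀ u : K,
      ∃ k t : ℕ, 0 < k ∧ 0 < t ∧ ⁅a ^ k, u ^ t⁆ ∈ N) :
    ((⊤ : Subgroup K).lowerCentralSeries (d + 1) : Set K) ⊆ isolator N := by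
  have hc := lowerCentralSeries_le_center_of_succ_eq_bot hK
  have hcen {a : K} (ha : a ∈ (⊤ : Subgroup K).lowerCentralSeries d) (v : K) :
      ⁅a, v⁆ ∈ center K :=
    hc (commutator_mem_commutator ha (mem_top v))
  rw [Subgroup.lowerCentralSeries_succ, Subgroup.commutator_def]
  apply closure_subset_isolator_of_subset_center
  · rintro _ ⟨a, ha, u, -, rfl⟩
    exact hcen ha u
  · rintro _ ⟨a, ha, u, -, rfl⟩
    obtain ⟨k, t, hk, ht, hN⟩ := h a ha u
    refine ⟨t * k, Nat.mul_pos ht hk, ?_⟩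
    rwa [pow_mul, ← commutatorElement_pow_right_of_mem_center (hcen ha u),
      ← commutatorElement_pow_left_of_mem_center (hcen ha _)]

theorem isolator_eq_univ_of_closure_eq_top {c : ℕ}
    (hK : (⊤ : Subgroup K).lowerCentralSeries (c + 1) = ⊥) {S : Set K} (hS : closure S = ⊤)
    {N : Subgroup K} (hSN : S ⊆ isolator N) : isolator N = Set.univ := by
  induction c generalizing K with
  | zero =>
    have hc := lowerCentralSeries_le_center_of_succ_eq_bot hK
    have := closure_subset_isolator_of_subset_center (fun s _ => hc (mem_top s)) hSN
    rwa [hS, coe_top, Set.univ_subset_iff] at this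
  | succ c ih =>
    set Z := (⊤ : Subgroup K).lowerCentralSeries (c + 1)
    set f := QuotientGroup.mk' Z
    have hf : Function.Surjective f := QuotientGroup.mk'_surjective Z
    have hQ : isolator (N.map f) = Set.univ := by
      refine ih (lowerCentralSeries_quotient_lowerCentralSeries_eq_bot _) (S := f '' S) ?_
        ((Set.image_mono hSN).trans (image_isolator_subset f N))
      rw [← MonoidHom.map_closure, hS, map_top_of_surjective f hf]
    have hsup (g : K) : g ∈ isolator (N ⊔ Z) := (mem_isolator_sup_iff Z).mpr (hQ ▸ trivial)
    have hZc := lowerCentralSeries_le_center_of_succ_eq_bot hK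
    have hZN : (Z : Set K) ⊆ isolator N := by
      refine lowerCentralSeries_succ_subset_isolator hK fun a _ u => ?_
      obtain ⟨k, hk, hak⟩ := hsup a
      obtain ⟨t, ht, hut⟩ := hsup u
      obtain ⟨h₁, hh₁, z₁, hz₁, e₁⟩ := mem_sup_of_normal_right.mp hak
      obtain ⟨h₂, hh₂, z₂, hz₂, e₂⟩ := mem_sup_of_normal_right.mp hut
      refine ⟨k, t, hk, ht, ?_⟩
      rw [← e₁, ← e₂, commutatorElement_mul_mul_of_mem_center (hZc hz₁) (hZc hz₂),
        commutatorElement_def]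
      exact N.mul_mem (N.mul_mem (N.mul_mem hh₁ hh₂) (N.inv_mem hh₁)) (N.inv_mem hh₂)
    exact Set.eq_univ_of_forall fun g => mem_isolator_of_mem_isolator_sup hZc hZN (hsup g)

theorem commutator_subset_isolator_commutator {c : ℕ}
    (hK : (⊤ : Subgroup K).lowerCentralSeries (c + 1) = ⊥) {N : Subgroup K}
    (hN : isolator N = Set.univ) : (commutator K : Set K) ⊆ isolator ⁅N, N⁆ := by
  induction c generalizing K with
  | zero =>
    rw [← top_lowerCentralSeries_one, hK, coe_bot, Set.singleton_subset_iff]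
    exact one_mem_isolator _
  | succ c ih =>
    set Z := (⊤ : Subgroup K).lowerCentralSeries (c + 1)
    set f := QuotientGroup.mk' Z
    have hf : Function.Surjective f := QuotientGroup.mk'_surjective Z
    have hQ : (commutator (K ⧸ Z) : Set (K ⧸ Z)) ⊆ isolator ⁅N.map f, N.map f⁆ := by
      refine ih (lowerCentralSeries_quotient_lowerCentralSeries_eq_bot _)
        (Set.eq_univ_of_forall fun q => ?_)
      obtain ⟨g, rfl⟩ := hf q
      exact image_isolator_subset f N ⟨g, hN ▸ trivial, rfl⟩
    have hZN : (Z : Set K) ⊆ isolator ⁅N, N⁆ := by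
      refine lowerCentralSeries_succ_subset_isolator hK fun a _ u => ?_
      obtain ⟨k, hk, hak⟩ : a ∈ isolator N := hN ▸ trivial
      obtain ⟨t, ht, hut⟩ : u ∈ isolator N := hN ▸ trivial
      exact ⟨k, t, hk, ht, commutator_mem_commutator hak hut⟩
    intro g hg
    refine mem_isolator_of_mem_isolator_sup
      (lowerCentralSeries_le_center_of_succ_eq_bot hK) hZN ?_
    rw [mem_isolator_sup_iff, map_commutator]
    apply hQ
    rw [← top_lowerCentralSeries_one, ← map_top_lowerCentralSeries_of_surjective hf]
    exact mem_map_of_mem f hg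

end Nilpotent

def Group.IsLocallyNilpotent (G : Type*) [Group G] : Prop :=
  ∀ S : Finset G, Group.IsNilpotent (closure (S : Set G))

section LocallyNilpotent

variable {G : Type*} [Group G] {N : Subgroup G}

theorem Group.IsLocallyNilpotent.isNilpotent_closure_pair (hG : Group.IsLocallyNilpotent G)
    (x y : G) : Group.IsNilpotent (closure {x, y}) := by
  classical
  have h := hG {x, y}
  rwa [Finset.coe_pair] at h

theorem mem_isolator_subgroupOf {K : Subgroup G} {g : K} :
    g ∈ isolator (N.subgroupOf K) ↔ (g : G) ∈ isolator N := by
  rw [subgroupOf, isolator_comap]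
  rfl

theorem closure_subset_isolator_of_isNilpotent {S : Set G} (hS : Group.IsNilpotent (closure S))
    (hSN : S ⊆ isolator N) : (closure S : Set G) ⊆ isolator N := by
  obtain ⟨c, hc⟩ := hS.exists_lowerCentralSeries_succ_eq_bot
  have h := isolator_eq_univ_of_closure_eq_top hc (closure_preimage_eq_top S)
    (N := N.subgroupOf (closure S)) fun s hs => mem_isolator_subgroupOf.mpr (hSN hs)
  intro g hg
  exact mem_isolator_subgroupOf.mp (h ▸ Set.mem_univ (⟨g, hg⟩ : closure S))

theorem commutator_subset_isolator_of_isNilpotent {K : Subgroup G} (hK : Group.IsNilpotent K)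
    (hKN : (K : Set G) ⊆ isolator N) : ((⁅K, K⁆ : Subgroup G) : Set G) ⊆ isolator ⁅N, N⁆ := by
  obtain ⟨c, hc⟩ := hK.exists_lowerCentralSeries_succ_eq_bot
  have h := commutator_subset_isolator_commutator hc
    (Set.eq_univ_of_forall fun g => mem_isolator_subgroupOf.mpr (hKN g.2))
  have hmap : (N.subgroupOf K).map K.subtype ≤ N := by
    rw [subgroupOf_map_subtype]
    exact inf_le_left
  rw [← K.range_subtype, MonoidHom.range_eq_map, ← map_commutator]
  rintro _ ⟨g, hg, rfl⟩
  refine isolator_mono (commutator_mono hmap hmap) ?_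
  rw [← map_commutator]
  exact image_isolator_subset K.subtype _ ⟨g, h hg, rfl⟩

theorem closure_pair_subset_isolator (hG : Group.IsLocallyNilpotent G) {x y : G}
    (hx : x ∈ isolator N) (hy : y ∈ isolator N) : (closure {x, y} : Set G) ⊆ isolator N :=
  closure_subset_isolator_of_isNilpotent (hG.isNilpotent_closure_pair x y)
    (Set.insert_subset hx (Set.singleton_subset_iff.mpr hy))

def isolatorSubgroup (hG : Group.IsLocallyNilpotent G) (N : Subgroup G) : Subgroup G where
  carrier := isolator N
  one_mem' := one_mem_isolator N
  mul_mem' hx hy := closure_pair_subset_isolator hG hx hy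
    (mul_mem (subset_closure (by simp)) (subset_closure (by simp)))
  inv_mem' := inv_mem_isolator

theorem commutatorElement_mem_isolator_commutator (hG : Group.IsLocallyNilpotent G) {x y : G}
    (hx : x ∈ isolator N) (hy : y ∈ isolator N) : ⁅x, y⁆ ∈ isolator ⁅N, N⁆ :=
  commutator_subset_isolator_of_isNilpotent (hG.isNilpotent_closure_pair x y)
    (closure_pair_subset_isolator hG hx hy)
    (commutator_mem_commutator (subset_closure (by simp)) (subset_closure (by simp)))

theorem eq_one_of_mem_isolator_bot (htf : ∀ g : G, g ≠ 1 → ¬IsOfFinOrder g) {g : G}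
    (hg : g ∈ isolator (⊥ : Subgroup G)) : g = 1 := by
  obtain ⟨n, hn, hgn⟩ := hg
  by_contra h
  exact htf g h (isOfFinOrder_iff_pow_eq_one.mpr ⟨n, hn, mem_bot.mp hgn⟩)

end LocallyNilpotent

/-- if `G` is a torsion-free locally nilpotent group and `M ≤ G` has
`I_G(M) = G`, then `G^(i) ⊆ I_G(M^(i))` for all `i`; in particular if `M` is soluble of
derived length `d` then so is `G`. -/
theorem stmt_11 {G : Type*} [Group G] (htf : ∀ g : G, g ≠ 1 → ¬IsOfFinOrder g)
    (hln : ∀ S : Finset G, Group.IsNilpotent (Subgroup.closure (S : Set G)))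
    (M : Subgroup G) (hiso : isolator M = Set.univ) :
    (∀ i : ℕ, (derivedSeries G i : Set G) ⊆ isolator ((derivedSeries M i).map M.subtype)) ∧
    (∀ d : ℕ, derivedSeries M d = ⊥ → derivedSeries G d = ⊥) := by
  have hderived (i : ℕ) :
      (derivedSeries G i : Set G) ⊆ isolator ((derivedSeries M i).map M.subtype) := by
    induction i with
    | zero =>
      rw [derivedSeries_zero, derivedSeries_zero, ← MonoidHom.range_eq_map, range_subtype, hiso]
      exact Set.subset_univ _
    | succ i ih =>
      rw [derivedSeries_succ, derivedSeries_succ, map_commutator]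
      change _ ≤ isolatorSubgroup hln _
      exact commutator_le.mpr fun g hg h hh =>
        commutatorElement_mem_isolator_commutator hln (ih hg) (ih hh)
  refine ⟨hderived, fun d hd => eq_bot_iff.mpr fun g hg => mem_bot.mpr ?_⟩
  have hg' := hderived d hg
  rw [hd, Subgroup.map_bot] at hg'
  exact eq_one_of_mem_isolator_bot htf hg'
end

section
/- PSL(3,3) contains a solvable subgroup of derived length exactly 5, namely the image in PSL(3,3) of the group of matrices of the form [[a,b,c],[d,e,f],[0,0,g]] in SL(3,3); this subgroup has a normal elementary abelian 3-subgroup K with quotient isomorphic to GL(2,3). -/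
/-!
Let `H` be the stabilizer of the plane `x₃ = 0` in `SL(3,3)`. Its top-left `2 × 2` block is a
surjection `H → GL(2,3)` whose kernel is the group of translations `[[1,0,c],[0,1,f],[0,0,1]]`,
elementary abelian of order `9`; and `H` embeds in `PSL(3,3)` because the centre of `SL(3,3)` is
trivial (its scalars `r` satisfy `r³ = r = 1`).

The derived series of `GL(2,3)` runs through `SL(2,3)`, `Q₈` and `{±1}`, so `H⁽⁴⁾` lies in the
abelian kernel and `H⁽⁵⁾ = 1`. For `H⁽⁴⁾ ≠ 1` we use that `⁅d, g⁆ = g` with `d ∈ H⁽ⁿ⁾` forces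
`g ∈ H⁽ⁿ⁺¹⁾`. In characteristic `3` an element `d` that inverts an element `g` of order `3` has
`⁅d, g⁆ = g⁻² = g`. Now `diag(-1, 1, -1)` inverts the two elementary unipotents of the block, which
therefore lie in `H'`; two of their commutators lift generators of `Q₈` and have commutator
`diag(-1, -1, 1) ∈ H⁽³⁾`; and this element inverts every translation, so the translations lie
in `H⁽⁴⁾`.
-/

/-- `PSL(3,3)`: the quotient of `SL(3,3)` by its centre. -/
abbrev PSL33 :=
  Matrix.SpecialLinearGroup (Fin 3) (ZMod 3) ⧸
    Subgroup.center (Matrix.SpecialLinearGroup (Fin 3) (ZMod 3))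

open Matrix Subgroup
open scoped commutatorElement MatrixGroups

section DerivedSeries

variable {G G' : Type*} [Group G] [Group G']

theorem derivedSeries_succ_le_of_commutatorElement_mem {n : ℕ} {S T : Subgroup G}
    (hS : derivedSeries G n ≤ S) (hT : ∀ a ∈ S, ∀ b ∈ S, ⁅a, b⁆ ∈ T) :
    derivedSeries G (n + 1) ≤ T := by
  rw [derivedSeries_succ]
  exact (commutator_mono hS hS).trans ((commutator_le ..).mpr hT)

theorem mem_derivedSeries_succ_of_commutatorElement_eq_self {n : ℕ} {d g : G}
    (hd : d ∈ derivedSeries G n) (hg : ⁅d, g⁆ = g) : g ∈ derivedSeries G (n + 1) := by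
  suffices ∀ m ≤ n + 1, g ∈ derivedSeries G m from this _ le_rfl
  intro m hm
  induction m with
  | zero => exact mem_top g
  | succ m ih =>
    rw [derivedSeries_succ, ← hg]
    exact commutator_mem_commutator (derivedSeries_antitone G (by omega) hd) (ih (by omega))

theorem MulEquiv.derivedSeries_eq_bot_iff (e : G ≃* G') (n : ℕ) :
    derivedSeries G' n = ⊥ ↔ derivedSeries G n = ⊥ := by
  rw [← map_derivedSeries_eq (f := e.toMonoidHom) e.surjective n,
    map_eq_bot_iff_of_injective _ e.injective]

end DerivedSeries

theorem Matrix.SpecialLinearGroup.center_eq_bot_of_pow_card_eq_one {n R : Type*} [Fintype n]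
    [DecidableEq n] [CommRing R] (h : ∀ r : R, r ^ Fintype.card n = 1 → r = 1) :
    center (SpecialLinearGroup n R) = ⊥ := by
  refine eq_bot_iff.mpr fun A hA => ?_
  obtain ⟨r, hr, hA⟩ := SpecialLinearGroup.mem_center_iff.mp hA
  rw [mem_bot, SpecialLinearGroup.ext_iff]
  simp [← hA, h r hr]

section Quad

variable {R : Type*} [CommRing R]

/-- Facts about `GL (Fin 2) (ZMod 3)` are checked by `decide` on tuples of entries, which the
kernel enumerates far faster than matrices. -/
def toQuad (A : Matrix (Fin 2) (Fin 2) R) : R × R × R × R := (A 0 0, A 0 1, A 1 0, A 1 1)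

def quadMul : R × R × R × R → R × R × R × R → R × R × R × R
  | (a, b, c, d), (e, f, g, h) => (a * e + b * g, a * f + b * h, c * e + d * g, c * f + d * h)

def quadAdj : R × R × R × R → R × R × R × R
  | (a, b, c, d) => (d, -b, -c, a)

def quadDet : R × R × R × R → R
  | (a, b, c, d) => a * d - b * c

def quadScalar (r : R) : R × R × R × R := (r, 0, 0, r)

def quadPow (x : R × R × R × R) : ℕ → R × R × R × R
  | 0 => quadScalar 1
  | n + 1 => quadMul (quadPow x n) x

def quadComm (x y : R × R × R × R) : R × R × R × R :=
  quadMul (quadMul (quadMul x y) (quadAdj x)) (quadAdj y)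

omit [CommRing R] in
theorem toQuad_injective : Function.Injective (toQuad : Matrix (Fin 2) (Fin 2) R → _) := by
  intro A B h
  simp only [toQuad, Prod.mk.injEq] at h
  rw [eta_fin_two A, eta_fin_two B, h.1, h.2.1, h.2.2.1, h.2.2.2]

theorem toQuad_scalar (r : R) : toQuad (scalar (Fin 2) r) = quadScalar r := by
  simp [toQuad, quadScalar]

theorem toQuad_mul (A B : Matrix (Fin 2) (Fin 2) R) :
    toQuad (A * B) = quadMul (toQuad A) (toQuad B) := by
  simp [toQuad, quadMul, mul_apply, Fin.sum_univ_two]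

theorem toQuad_pow (A : Matrix (Fin 2) (Fin 2) R) (n : ℕ) :
    toQuad (A ^ n) = quadPow (toQuad A) n := by
  induction n with
  | zero => simpa [quadPow] using toQuad_scalar (1 : R)
  | succ n ih => rw [pow_succ, toQuad_mul, ih, quadPow]

theorem quadDet_toQuad (A : Matrix (Fin 2) (Fin 2) R) : quadDet (toQuad A) = A.det := by
  rw [det_fin_two]; rfl

theorem toQuad_adjugate (A : Matrix (Fin 2) (Fin 2) R) :
    toQuad A.adjugate = quadAdj (toQuad A) := by
  simp [adjugate_fin_two, toQuad, quadAdj]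

namespace Matrix.GeneralLinearGroup

theorem det_eq_one_iff_quadDet {g : GL (Fin 2) R} :
    det g = 1 ↔ quadDet (toQuad g.val) = 1 := by
  rw [Units.ext_iff, val_det_apply, quadDet_toQuad, Units.val_one]

theorem eq_iff_toQuad {g h : GL (Fin 2) R} : g = h ↔ toQuad g.val = toQuad h.val :=
  Units.ext_iff.trans toQuad_injective.eq_iff.symm

theorem toQuad_val_one : toQuad (1 : GL (Fin 2) R).val = quadScalar 1 := by
  simpa using toQuad_scalar (1 : R)

theorem toQuad_val_neg_one : toQuad (-1 : GL (Fin 2) R).val = quadScalar (-1) := by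
  rw [Units.val_neg, Units.val_one, ← toQuad_scalar, map_neg, map_one]

theorem pow_eq_one_iff_quadPow {g : GL (Fin 2) R} {n : ℕ} :
    g ^ n = 1 ↔ quadPow (toQuad g.val) n = quadScalar 1 := by
  rw [eq_iff_toQuad, Units.val_pow_eq_pow_val, toQuad_pow, toQuad_val_one]

theorem toQuad_val_inv {g : GL (Fin 2) R} (hg : det g = 1) :
    toQuad (g⁻¹).val = quadAdj (toQuad g.val) := by
  rw [Units.ext_iff, val_det_apply] at hg
  rw [coe_units_inv, inv_def, hg, Units.val_one, Ring.inverse_one, one_smul, toQuad_adjugate]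

theorem toQuad_val_commutatorElement {g h : GL (Fin 2) R} (hg : det g = 1) (hh : det h = 1) :
    toQuad ⁅g, h⁆.val = quadComm (toQuad g.val) (toQuad h.val) := by
  simp only [commutatorElement_def, Units.val_mul, toQuad_mul, toQuad_val_inv hg,
    toQuad_val_inv hh, quadComm]

end Matrix.GeneralLinearGroup

end Quad

section GL23

open Matrix.GeneralLinearGroup

set_option synthInstance.maxSize 1024
set_option maxRecDepth 40000

theorem quadPow_quadMul_four_eq_one : ∀ x y : ZMod 3 × ZMod 3 × ZMod 3 × ZMod 3,
    quadDet x = 1 → quadPow x 4 = quadScalar 1 → quadDet y = 1 → quadPow y 4 = quadScalar 1 →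
    quadPow (quadMul x y) 4 = quadScalar 1 := by
  decide

theorem quadPow_quadComm_four_eq_one : ∀ x y : ZMod 3 × ZMod 3 × ZMod 3 × ZMod 3,
    quadDet x = 1 → quadDet y = 1 → quadPow (quadComm x y) 4 = quadScalar 1 := by
  decide

theorem quadComm_eq_one_or_neg_one : ∀ x y : ZMod 3 × ZMod 3 × ZMod 3 × ZMod 3,
    quadDet x = 1 → quadPow x 4 = quadScalar 1 → quadDet y = 1 → quadPow y 4 = quadScalar 1 →
    quadComm x y = quadScalar 1 ∨ quadComm x y = quadScalar (-1) := by
  decide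

/-- In `SL(2,3)` the elements of order dividing `4` form the quaternion group `Q₈`. -/
def quaternionSubgroup : Subgroup (GL (Fin 2) (ZMod 3)) where
  carrier := {g | det g = 1 ∧ g ^ 4 = 1}
  mul_mem' {g h} := by
    rintro ⟨hg₁, hg₄⟩ ⟨hh₁, hh₄⟩
    refine ⟨by rw [map_mul, hg₁, hh₁, one_mul], ?_⟩
    rw [det_eq_one_iff_quadDet] at hg₁ hh₁
    rw [pow_eq_one_iff_quadPow] at hg₄ hh₄ ⊢
    rw [Units.val_mul, toQuad_mul]
    exact quadPow_quadMul_four_eq_one _ _ hg₁ hg₄ hh₁ hh₄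
  one_mem' := ⟨map_one _, one_pow 4⟩
  inv_mem' {g} hg := ⟨by rw [map_inv, hg.1, inv_one], by rw [inv_pow, hg.2, inv_one]⟩

theorem commutatorElement_mem_quaternionSubgroup {g h : GL (Fin 2) (ZMod 3)}
    (hg : det g = 1) (hh : det h = 1) : ⁅g, h⁆ ∈ quaternionSubgroup := by
  refine ⟨by rw [map_commutatorElement, commutatorElement_eq_one_iff_mul_comm, mul_comm], ?_⟩
  rw [pow_eq_one_iff_quadPow, toQuad_val_commutatorElement hg hh]
  rw [det_eq_one_iff_quadDet] at hg hh
  exact quadPow_quadComm_four_eq_one _ _ hg hh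

theorem commutatorElement_mem_center_of_mem_quaternionSubgroup {g h : GL (Fin 2) (ZMod 3)}
    (hg : g ∈ quaternionSubgroup) (hh : h ∈ quaternionSubgroup) :
    ⁅g, h⁆ ∈ center (GL (Fin 2) (ZMod 3)) := by
  obtain ⟨hg₁, hg₄⟩ := hg
  obtain ⟨hh₁, hh₄⟩ := hh
  have hgh := toQuad_val_commutatorElement hg₁ hh₁
  rw [det_eq_one_iff_quadDet] at hg₁ hh₁
  rw [pow_eq_one_iff_quadPow] at hg₄ hh₄
  rcases quadComm_eq_one_or_neg_one _ _ hg₁ hg₄ hh₁ hh₄ with h1 | h1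
  · rw [← toQuad_val_one, ← hgh, ← eq_iff_toQuad] at h1
    rw [h1]; exact one_mem _
  · rw [← toQuad_val_neg_one, ← hgh, ← eq_iff_toQuad] at h1
    rw [h1]; exact mem_center_iff.mpr fun k => (Commute.neg_one_right k).eq

theorem derivedSeries_GL_two_zmod_three_four_eq_bot :
    derivedSeries (GL (Fin 2) (ZMod 3)) 4 = ⊥ := by
  have h1 : derivedSeries (GL (Fin 2) (ZMod 3)) 1 ≤ det.ker :=
    Abelianization.commutator_subset_ker _
  have h2 : derivedSeries (GL (Fin 2) (ZMod 3)) 2 ≤ quaternionSubgroup :=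
    derivedSeries_succ_le_of_commutatorElement_mem h1 fun _ ha _ hb =>
      commutatorElement_mem_quaternionSubgroup ha hb
  have h3 : derivedSeries (GL (Fin 2) (ZMod 3)) 3 ≤ center _ :=
    derivedSeries_succ_le_of_commutatorElement_mem h2 fun _ ha _ hb =>
      commutatorElement_mem_center_of_mem_quaternionSubgroup ha hb
  refine le_bot_iff.mp (derivedSeries_succ_le_of_commutatorElement_mem h3 fun a _ b hb => ?_)
  rw [mem_bot, commutatorElement_eq_one_iff_mul_comm]
  exact mem_center_iff.mp hb a

end GL23

theorem Matrix.submatrix_castSucc_mul {R : Type*} [CommRing R] {n : ℕ}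
    (A B : Matrix (Fin (n + 1)) (Fin (n + 1)) R) (hB : ∀ j : Fin n, B (Fin.last n) j.castSucc = 0) :
    (A * B).submatrix Fin.castSucc Fin.castSucc =
      A.submatrix Fin.castSucc Fin.castSucc * B.submatrix Fin.castSucc Fin.castSucc := by
  ext i j
  simp [mul_apply, Fin.sum_univ_castSucc, hB]

section PlaneStabilizer

variable (R : Type*) [CommRing R]

def planeStabilizer : Subgroup SL(3, R) where
  carrier := {A | A 2 0 = 0 ∧ A 2 1 = 0}
  mul_mem' {A B} hA hB := by
    constructor <;> simp [mul_apply, Fin.sum_univ_three, hA.1, hA.2, hB.1, hB.2]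
  one_mem' := by simp
  inv_mem' {A} hA := by
    constructor <;> simp [adjugate_fin_three, hA.1, hA.2]

variable {R}

theorem mem_planeStabilizer {A : SL(3, R)} : A ∈ planeStabilizer R ↔ A 2 0 = 0 ∧ A 2 1 = 0 :=
  Iff.rfl

namespace planeStabilizer

variable (R) in
def toGL : planeStabilizer R →* GL (Fin 2) R :=
  MonoidHom.toHomUnits
    { toFun A := (A : Matrix (Fin 3) (Fin 3) R).submatrix Fin.castSucc Fin.castSucc
      map_one' := by simp [submatrix_one _ (Fin.castSucc_injective _)]
      map_mul' A B := submatrix_castSucc_mul _ _ (Fin.forall_fin_two.mpr B.2) }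

theorem coe_toGL (A : planeStabilizer R) :
    (toGL R A : Matrix (Fin 2) (Fin 2) R) =
      (A : Matrix (Fin 3) (Fin 3) R).submatrix Fin.castSucc Fin.castSucc :=
  rfl

theorem det_coe_eq_det_toGL_mul (A : planeStabilizer R) :
    (A : Matrix (Fin 3) (Fin 3) R).det = (toGL R A : Matrix (Fin 2) (Fin 2) R).det * A.1 2 2 := by
  have h := A.2
  rw [mem_planeStabilizer] at h
  rw [coe_toGL, det_fin_three, det_fin_two]
  simp only [submatrix_apply, Fin.castSucc_zero, Fin.castSucc_one, h.1, h.2]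
  ring

theorem toGL_surjective : Function.Surjective (toGL R) := by
  intro g
  let A : Matrix (Fin 3) (Fin 3) R :=
    !![g.val 0 0, g.val 0 1, 0; g.val 1 0, g.val 1 1, 0; 0, 0, ↑(GeneralLinearGroup.det g)⁻¹]
  have hA : A.det = 1 := by
    rw [det_fin_three, ← Units.mul_inv (GeneralLinearGroup.det g), GeneralLinearGroup.val_det_apply,
      det_fin_two]
    simp only [A, of_apply, cons_val', cons_val_zero, cons_val_one, cons_val, cons_val_fin_one]
    ring
  refine ⟨⟨⟨A, hA⟩, rfl, rfl⟩, Units.ext ?_⟩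
  ext i j
  fin_cases i <;> fin_cases j <;> rfl

def translation (c f : R) : Matrix (Fin 3) (Fin 3) R := !![1, 0, c; 0, 1, f; 0, 0, 1]

theorem translation_zero : translation (0 : R) 0 = 1 := by
  ext i j
  fin_cases i <;> fin_cases j <;> rfl

theorem translation_mul (c f c' f' : R) :
    translation c f * translation c' f' = translation (c + c') (f + f') := by
  ext i j
  fin_cases i <;> fin_cases j <;> simp [translation, mul_apply, Fin.sum_univ_three, add_comm]

theorem translation_pow (c f : R) (n : ℕ) : translation c f ^ n = translation (n • c) (n • f) := by
  induction n with
  | zero => rw [pow_zero, zero_nsmul, zero_nsmul, translation_zero]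
  | succ n ih => rw [pow_succ, ih, translation_mul, succ_nsmul, succ_nsmul]

theorem coe_eq_translation_of_toGL_eq_one {A : planeStabilizer R} (hA : toGL R A = 1) :
    (A : Matrix (Fin 3) (Fin 3) R) = translation (A.1 0 2) (A.1 1 2) := by
  have hblock := congrArg (fun g : GL (Fin 2) R => (g : Matrix (Fin 2) (Fin 2) R)) hA
  simp only [coe_toGL, Units.val_one] at hblock
  have h00 : A.1 0 0 = 1 := by simpa using congrFun₂ hblock 0 0
  have h01 : A.1 0 1 = 0 := by simpa using congrFun₂ hblock 0 1
  have h10 : A.1 1 0 = 0 := by simpa using congrFun₂ hblock 1 0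
  have h11 : A.1 1 1 = 1 := by simpa using congrFun₂ hblock 1 1
  have h22 : A.1 2 2 = 1 := by
    simpa [(A.1).2, hA] using (det_coe_eq_det_toGL_mul A).symm
  have h := A.2
  rw [mem_planeStabilizer] at h
  ext i j
  fin_cases i <;> fin_cases j <;> simp [translation, h00, h01, h10, h11, h22, h.1, h.2]

theorem mul_comm_of_mem_ker {A B : planeStabilizer R} (hA : A ∈ (toGL R).ker)
    (hB : B ∈ (toGL R).ker) : A * B = B * A := by
  refine Subtype.ext (Subtype.ext ?_)
  change ((A : SL(3, R)) : Matrix (Fin 3) (Fin 3) R) * B = B * A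
  rw [coe_eq_translation_of_toGL_eq_one hA, coe_eq_translation_of_toGL_eq_one hB,
    translation_mul, translation_mul, add_comm (A.1 0 2), add_comm (A.1 1 2)]

theorem pow_char_eq_one_of_mem_ker (p : ℕ) [CharP R p] {A : planeStabilizer R}
    (hA : A ∈ (toGL R).ker) : A ^ p = 1 := by
  refine Subtype.ext (Subtype.ext ?_)
  change ((A : SL(3, R)) : Matrix (Fin 3) (Fin 3) R) ^ p = 1
  rw [coe_eq_translation_of_toGL_eq_one hA, translation_pow, nsmul_eq_mul, nsmul_eq_mul,
    CharP.cast_eq_zero, zero_mul, zero_mul, translation_zero]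

end planeStabilizer

end PlaneStabilizer

namespace planeStabilizer

theorem derivedSeries_four_le_ker :
    derivedSeries (planeStabilizer (ZMod 3)) 4 ≤ (toGL (ZMod 3)).ker := by
  rw [← Subgroup.map_eq_bot_iff, eq_bot_iff, ← derivedSeries_GL_two_zmod_three_four_eq_bot]
  exact map_derivedSeries_le_derivedSeries _ 4

theorem derivedSeries_five_eq_bot : derivedSeries (planeStabilizer (ZMod 3)) 5 = ⊥ :=
  le_bot_iff.mp <| derivedSeries_succ_le_of_commutatorElement_mem derivedSeries_four_le_ker
    fun _ ha _ hb =>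
      mem_bot.mpr (commutatorElement_eq_one_iff_mul_comm.mpr (mul_comm_of_mem_ker ha hb))

def reflection : planeStabilizer (ZMod 3) :=
  ⟨⟨!![-1, 0, 0; 0, 1, 0; 0, 0, -1], by decide⟩, rfl, rfl⟩

def upperUnipotent : planeStabilizer (ZMod 3) :=
  ⟨⟨!![1, 1, 0; 0, 1, 0; 0, 0, 1], by decide⟩, rfl, rfl⟩

def lowerUnipotent : planeStabilizer (ZMod 3) :=
  ⟨⟨!![1, 0, 0; 1, 1, 0; 0, 0, 1], by decide⟩, rfl, rfl⟩

def negOneBlock : planeStabilizer (ZMod 3) :=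
  ⟨⟨!![-1, 0, 0; 0, -1, 0; 0, 0, 1], by decide⟩, rfl, rfl⟩

def unitTranslation : planeStabilizer (ZMod 3) :=
  ⟨⟨translation 1 0, by decide⟩, rfl, rfl⟩

theorem unitTranslation_mem_derivedSeries_four :
    unitTranslation ∈ derivedSeries (planeStabilizer (ZMod 3)) 4 := by
  have ha : upperUnipotent ∈ derivedSeries _ 1 :=
    mem_derivedSeries_succ_of_commutatorElement_eq_self (mem_top reflection) (by decide)
  have hb : lowerUnipotent ∈ derivedSeries _ 1 :=
    mem_derivedSeries_succ_of_commutatorElement_eq_self (mem_top reflection) (by decide)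
  have hd : negOneBlock ∈ derivedSeries _ 3 := by
    rw [show negOneBlock = ⁅⁅upperUnipotent, lowerUnipotent⁆, ⁅upperUnipotent, lowerUnipotent⁻¹⁆⁆ by
      decide]
    exact commutator_mem_commutator (commutator_mem_commutator ha hb)
      (commutator_mem_commutator ha (inv_mem hb))
  exact mem_derivedSeries_succ_of_commutatorElement_eq_self hd (by decide)

theorem derivedSeries_four_ne_bot : derivedSeries (planeStabilizer (ZMod 3)) 4 ≠ ⊥ := fun h =>
  (by decide : unitTranslation ≠ 1) (mem_bot.mp (h ▸ unitTranslation_mem_derivedSeries_four))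

end planeStabilizer

theorem center_SL_three_zmod_three_eq_bot : center SL(3, ZMod 3) = ⊥ :=
  SpecialLinearGroup.center_eq_bot_of_pow_card_eq_one fun r hr => by
    rwa [Fintype.card_fin, ZMod.pow_card] at hr

/-- `PSL(3,3)` contains a soluble subgroup of derived length exactly `5`,
namely the image of the stabilizer of a plane (the block upper triangular matrices
`[[a,b,c],[d,e,f],[0,0,g]]` in `SL(3,3)`); it has a normal elementary abelian `3`-subgroup
`K` with quotient isomorphic to `GL(2,3)`. -/
theorem stmt_18 :
    ∃ H : Subgroup PSL33,
      (∀ x : PSL33, x ∈ H ↔ ∃ A : Matrix.SpecialLinearGroup (Fin 3) (ZMod 3),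
        QuotientGroup.mk A = x ∧ (A : Matrix (Fin 3) (Fin 3) (ZMod 3)) 2 0 = 0 ∧
          (A : Matrix (Fin 3) (Fin 3) (ZMod 3)) 2 1 = 0) ∧
      derivedSeries H 5 = ⊥ ∧ derivedSeries H 4 ≠ ⊥ ∧
      ∃ (K : Subgroup H) (hK : K.Normal),
        (∀ x ∈ K, x ^ 3 = 1) ∧ (∀ a ∈ K, ∀ b ∈ K, a * b = b * a) ∧
        (letI := hK; Nonempty ((H ⧸ K) ≃* GL (Fin 2) (ZMod 3))) := by
  have hmk : Function.Injective (QuotientGroup.mk' (center SL(3, ZMod 3))) := by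
    rw [← MonoidHom.ker_eq_bot_iff, QuotientGroup.ker_mk', center_SL_three_zmod_three_eq_bot]
  set e := (planeStabilizer (ZMod 3)).equivMapOfInjective _ hmk
  set φ := (planeStabilizer.toGL (ZMod 3)).comp e.symm.toMonoidHom
  refine ⟨(planeStabilizer (ZMod 3)).map (QuotientGroup.mk' _), fun x => ?_,
    (e.derivedSeries_eq_bot_iff 5).mpr planeStabilizer.derivedSeries_five_eq_bot,
    (e.derivedSeries_eq_bot_iff 4).not.mpr planeStabilizer.derivedSeries_four_ne_bot,
    φ.ker, φ.normal_ker, fun x hx => ?_, fun a ha b hb => ?_,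
    ⟨QuotientGroup.quotientKerEquivOfSurjective φ
      (planeStabilizer.toGL_surjective.comp e.symm.surjective)⟩⟩
  · simp only [mem_map, QuotientGroup.coe_mk', mem_planeStabilizer]
    exact exists_congr fun A => and_comm
  · exact e.symm.injective (by simpa using planeStabilizer.pow_char_eq_one_of_mem_ker 3 hx)
  · exact e.symm.injective (by simpa using planeStabilizer.mul_comm_of_mem_ker ha hb)
end
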